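/- arXiv:1808.01380 — 2 statements merged into one kernel-verified Lean document; each statement's English description precedes it below -/
import Mathlib

section
/- A matrix A with S(A) ≠ 0 is a critical point of F restricted to its conjugation orbit {gAg⁻¹ : g ∈ GL_{n-1}(ℝ)} if and only if c₂(A)[A,Aᵀ] = 2c₃(A)[Aᵀ,[A,[A,Aᵀ]]]. -/
open Matrix

/-- Symmetric part `S(A) = (A + Aᵀ)/2`. -/
noncomputable def Ssym {m : ℕ} (A : Matrix (Fin m) (Fin m) ℝ) : Matrix (Fin m) (Fin m) ℝ :=
  (1 / 2 : ℝ) • (A + Aᵀ)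

/-- Commutator of matrices. -/
def brk {m : ℕ} (X Y : Matrix (Fin m) (Fin m) ℝ) : Matrix (Fin m) (Fin m) ℝ :=
  X * Y - Y * X

/-- Squared norm `|X|² = tr (X Xᵀ)`. -/
noncomputable def nsq {m : ℕ} (X : Matrix (Fin m) (Fin m) ℝ) : ℝ :=
  (X * Xᵀ).trace

/-- The Ricci pinching functional of the almost-abelian solvmanifold attached to `A`:
`F(A) = (tr S(A)² + (tr A)²)² / (tr S(A)² (tr S(A)² + (tr A)²) + ¼|[A,Aᵀ]|²)`. -/
noncomputable def Fpinch {m : ℕ} (A : Matrix (Fin m) (Fin m) ℝ) : ℝ :=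
  ((Ssym A * Ssym A).trace + A.trace ^ 2) ^ 2 /
    ((Ssym A * Ssym A).trace * ((Ssym A * Ssym A).trace + A.trace ^ 2)
      + (1 / 4) * nsq (brk A Aᵀ))

/-- Coefficient `c₂(A) = (tr S(A)²+(tr A)²)(−2(tr A)²(tr S(A)²+(tr A)²)+|[A,Aᵀ]|²)`. -/
noncomputable def c2 {m : ℕ} (A : Matrix (Fin m) (Fin m) ℝ) : ℝ :=
  ((Ssym A * Ssym A).trace + A.trace ^ 2) *
    (-2 * A.trace ^ 2 * ((Ssym A * Ssym A).trace + A.trace ^ 2) + nsq (brk A Aᵀ))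

/-- Coefficient `c₃(A) = (tr S(A)²+(tr A)²)²`. -/
noncomputable def c3 {m : ℕ} (A : Matrix (Fin m) (Fin m) ℝ) : ℝ :=
  ((Ssym A * Ssym A).trace + A.trace ^ 2) ^ 2

attribute [local instance] Matrix.normedAddCommGroup Matrix.normedSpace

/-! Write `F = N² / D` with `N = tr S² + (tr A)²` and `D = tr S² · N + ¼|[A,Aᵀ]|²`.
In an orbit direction `X = [A,B]` the trace is constant, and invariance of the trace form,
`tr([X,Y]Z) = tr(X[Y,Z])`, turns the derivatives of `tr S²` and `|[A,Aᵀ]|²` into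
`-tr(B[A,Aᵀ])` and `-4 tr(B[Aᵀ,[A,[A,Aᵀ]]])`. The quotient rule then gives
`dF_A([A,B]) = -tr(B M) / (2D²)` with `M = c₂[A,Aᵀ] - 2c₃[Aᵀ,[A,[A,Aᵀ]]]`. As `D > 0` once
`S(A) ≠ 0` and the trace pairing is nondegenerate, `A` is critical exactly when `M = 0`. -/

variable {m : ℕ}

section TraceAlgebra

lemma trace_brk (X Y : Matrix (Fin m) (Fin m) ℝ) : (brk X Y).trace = 0 := by
  rw [brk, trace_sub, trace_mul_comm, sub_self]

lemma trace_brk_mul (X Y Z : Matrix (Fin m) (Fin m) ℝ) :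
    (brk X Y * Z).trace = (X * brk Y Z).trace := by
  simp only [brk, Matrix.sub_mul, Matrix.mul_sub, trace_sub, Matrix.mul_assoc]
  rw [trace_mul_comm Y, Matrix.mul_assoc]

lemma transpose_brk (X Y : Matrix (Fin m) (Fin m) ℝ) : (brk X Y)ᵀ = brk Yᵀ Xᵀ := by
  simp [brk, transpose_sub, transpose_mul]

lemma transpose_brk_self_transpose (A : Matrix (Fin m) (Fin m) ℝ) :
    (brk A Aᵀ)ᵀ = brk A Aᵀ := by
  rw [transpose_brk, transpose_transpose]

lemma transpose_Ssym (A : Matrix (Fin m) (Fin m) ℝ) : (Ssym A)ᵀ = Ssym A := by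
  simp [Ssym, transpose_smul, transpose_add, add_comm]

lemma brk_self_Ssym (A : Matrix (Fin m) (Fin m) ℝ) :
    brk A (Ssym A) = (1 / 2 : ℝ) • brk A Aᵀ := by
  simp only [Ssym, brk, Matrix.smul_mul, Matrix.mul_smul, ← smul_sub]
  congr 1
  noncomm_ring

lemma brk_transpose_brk_brk (A : Matrix (Fin m) (Fin m) ℝ) :
    brk Aᵀ (brk A (brk A Aᵀ)) = brk A (brk Aᵀ (brk A Aᵀ)) := by
  simp only [brk]
  noncomm_ring

lemma trace_mul_transpose_eq_trace_mul (X Y : Matrix (Fin m) (Fin m) ℝ) :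
    (X * Yᵀ).trace = (Xᵀ * Y).trace := by
  rw [← trace_transpose, transpose_mul, transpose_transpose, trace_mul_comm]

lemma trace_mul_transpose_self_nonneg (X : Matrix (Fin m) (Fin m) ℝ) : 0 ≤ (X * Xᵀ).trace := by
  simpa using (posSemidef_self_mul_conjTranspose X).trace_nonneg

lemma trace_mul_transpose_self_pos {X : Matrix (Fin m) (Fin m) ℝ} (hX : X ≠ 0) :
    0 < (X * Xᵀ).trace := by
  refine (trace_mul_transpose_self_nonneg X).lt_of_ne' ?_
  simpa using (trace_mul_conjTranspose_self_eq_zero_iff (A := X)).not.mpr hX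

lemma trace_mul_Ssym {S : Matrix (Fin m) (Fin m) ℝ} (hS : Sᵀ = S) (Y : Matrix (Fin m) (Fin m) ℝ) :
    (S * Ssym Y).trace = (S * Y).trace := by
  rw [Ssym, Matrix.mul_smul, Matrix.mul_add, trace_smul, trace_add,
    trace_mul_transpose_eq_trace_mul, hS, smul_eq_mul]
  ring

lemma trace_mul_brk_add_brk_transpose {C : Matrix (Fin m) (Fin m) ℝ} (hC : Cᵀ = C)
    (A Y : Matrix (Fin m) (Fin m) ℝ) :
    (C * (brk A Yᵀ + brk Y Aᵀ)).trace = 2 * (brk Aᵀ C * Y).trace := by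
  have h₁ : (C * brk A Yᵀ).trace = (brk Aᵀ C * Y).trace := by
    rw [← trace_brk_mul, trace_mul_transpose_eq_trace_mul, transpose_brk, hC]
  have h₂ : (C * brk Y Aᵀ).trace = (brk Aᵀ C * Y).trace := by
    rw [← trace_brk_mul, trace_mul_comm, trace_brk_mul]
  rw [Matrix.mul_add, trace_add, h₁, h₂]
  ring

lemma trace_mul_brk (X A B : Matrix (Fin m) (Fin m) ℝ) :
    (X * brk A B).trace = -(B * brk A X).trace := by
  rw [← trace_brk_mul, trace_mul_comm, brk, brk, ← neg_sub, Matrix.mul_neg, trace_neg]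

lemma trace_Ssym_mul_brk (A B : Matrix (Fin m) (Fin m) ℝ) :
    (Ssym A * brk A B).trace = -(1 / 2) * (B * brk A Aᵀ).trace := by
  rw [trace_mul_brk, brk_self_Ssym, Matrix.mul_smul, trace_smul, smul_eq_mul]
  ring

end TraceAlgebra

section Calculus

/- Mathlib's normed-space calculus lemmas see `Matrix` through `Matrix.normedAddCommGroup`,
whereas `fderiv ℝ f x` on matrices (as in `stmt_12`) carries the product topology instance. The two
agree only after unfolding, so those lemmas are applied to a `HasFDerivAt` or an equation whose
type is written out, rather than used for rewriting. -/

variable {f g : Matrix (Fin m) (Fin m) ℝ → Matrix (Fin m) (Fin m) ℝ} {x : Matrix (Fin m) (Fin m) ℝ}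

lemma isBoundedBilinearMap_matrix_mul :
    IsBoundedBilinearMap ℝ (fun p : Matrix (Fin m) (Fin m) ℝ × Matrix (Fin m) (Fin m) ℝ =>
      p.1 * p.2) :=
  (LinearMap.mul ℝ (Matrix (Fin m) (Fin m) ℝ)).toContinuousBilinearMap.isBoundedBilinearMap

lemma isBoundedLinearMap_matrix_trace :
    IsBoundedLinearMap ℝ (trace : Matrix (Fin m) (Fin m) ℝ → ℝ) :=
  (traceLinearMap (Fin m) ℝ ℝ).toContinuousLinearMap.isBoundedLinearMap

lemma isBoundedLinearMap_matrix_transpose :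
    IsBoundedLinearMap ℝ (transpose : Matrix (Fin m) (Fin m) ℝ → Matrix (Fin m) (Fin m) ℝ) :=
  (transposeLinearEquiv (Fin m) (Fin m) ℝ ℝ).toLinearMap.toContinuousLinearMap.isBoundedLinearMap

lemma DifferentiableAt.matrix_mul (hf : DifferentiableAt ℝ f x) (hg : DifferentiableAt ℝ g x) :
    DifferentiableAt ℝ (fun y => f y * g y) x :=
  (isBoundedBilinearMap_matrix_mul.differentiableAt (f x, g x)).comp (f := fun y => (f y, g y))
    x (hf.prodMk hg)

lemma fderiv_matrix_mul_apply (hf : DifferentiableAt ℝ f x) (hg : DifferentiableAt ℝ g x)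
    (v : Matrix (Fin m) (Fin m) ℝ) :
    fderiv ℝ (fun y => f y * g y) x v = f x * fderiv ℝ g x v + fderiv ℝ f x v * g x := by
  have h : HasFDerivAt (fun y => f y * g y) _ x :=
    (isBoundedBilinearMap_matrix_mul.hasFDerivAt (f x, g x)).comp (f := fun y => (f y, g y)) x
      (hf.hasFDerivAt.prodMk hg.hasFDerivAt)
  rw [h.fderiv]
  rfl

lemma DifferentiableAt.matrix_trace (hf : DifferentiableAt ℝ f x) :
    DifferentiableAt ℝ (fun y => (f y).trace) x :=
  isBoundedLinearMap_matrix_trace.differentiableAt.comp x hf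

lemma fderiv_matrix_trace_apply (hf : DifferentiableAt ℝ f x) (v : Matrix (Fin m) (Fin m) ℝ) :
    fderiv ℝ (fun y => (f y).trace) x v = (fderiv ℝ f x v).trace := by
  have h : HasFDerivAt (fun y => (f y).trace) _ x :=
    isBoundedLinearMap_matrix_trace.hasFDerivAt.comp x hf.hasFDerivAt
  rw [h.fderiv]
  rfl

lemma DifferentiableAt.matrix_transpose (hf : DifferentiableAt ℝ f x) :
    DifferentiableAt ℝ (fun y => (f y)ᵀ) x :=
  isBoundedLinearMap_matrix_transpose.differentiableAt.comp x hf

lemma fderiv_matrix_transpose_apply (hf : DifferentiableAt ℝ f x) (v : Matrix (Fin m) (Fin m) ℝ) :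
    fderiv ℝ (fun y => (f y)ᵀ) x v = (fderiv ℝ f x v)ᵀ := by
  have h : HasFDerivAt (fun y => (f y)ᵀ) _ x :=
    isBoundedLinearMap_matrix_transpose.hasFDerivAt.comp x hf.hasFDerivAt
  rw [h.fderiv]
  rfl

lemma DifferentiableAt.brk (hf : DifferentiableAt ℝ f x) (hg : DifferentiableAt ℝ g x) :
    DifferentiableAt ℝ (fun y => brk (f y) (g y)) x :=
  (hf.matrix_mul hg).sub (hg.matrix_mul hf)

lemma fderiv_brk_apply (hf : DifferentiableAt ℝ f x) (hg : DifferentiableAt ℝ g x)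
    (v : Matrix (Fin m) (Fin m) ℝ) :
    fderiv ℝ (fun y => brk (f y) (g y)) x v
      = brk (f x) (fderiv ℝ g x v) + brk (fderiv ℝ f x v) (g x) := by
  have h : HasFDerivAt (fun y => brk (f y) (g y))
      (fderiv ℝ (fun y => f y * g y) x - fderiv ℝ (fun y => g y * f y) x) x :=
    (hf.matrix_mul hg).hasFDerivAt.sub (hg.matrix_mul hf).hasFDerivAt
  rw [h.fderiv, _root_.sub_apply, fderiv_matrix_mul_apply hf hg,
    fderiv_matrix_mul_apply hg hf, brk, brk]
  abel

lemma fderiv_nsq_apply (hf : DifferentiableAt ℝ f x) (v : Matrix (Fin m) (Fin m) ℝ) :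
    fderiv ℝ (fun y => nsq (f y)) x v = 2 * ((f x)ᵀ * fderiv ℝ f x v).trace := by
  unfold nsq
  rw [fderiv_matrix_trace_apply (hf.matrix_mul hf.matrix_transpose),
    fderiv_matrix_mul_apply hf hf.matrix_transpose, fderiv_matrix_transpose_apply hf, trace_add,
    trace_mul_transpose_eq_trace_mul, trace_mul_comm (fderiv ℝ f x v)]
  ring

end Calculus

section Gradients

lemma isBoundedLinearMap_Ssym : IsBoundedLinearMap ℝ (Ssym : Matrix (Fin m) (Fin m) ℝ → _) :=
  (IsBoundedLinearMap.id.add isBoundedLinearMap_matrix_transpose).smul (1 / 2 : ℝ)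

lemma differentiableAt_Ssym (A : Matrix (Fin m) (Fin m) ℝ) : DifferentiableAt ℝ Ssym A :=
  isBoundedLinearMap_Ssym.differentiableAt

lemma fderiv_Ssym_apply (A Y : Matrix (Fin m) (Fin m) ℝ) : fderiv ℝ Ssym A Y = Ssym Y := by
  have h : HasFDerivAt Ssym _ A := isBoundedLinearMap_Ssym.hasFDerivAt
  rw [h.fderiv]
  rfl

lemma fderiv_trace_Ssym_mul_Ssym_apply (A Y : Matrix (Fin m) (Fin m) ℝ) :
    fderiv ℝ (fun X => (Ssym X * Ssym X).trace) A Y = 2 * (Ssym A * Y).trace := by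
  have hS := differentiableAt_Ssym A
  rw [fderiv_matrix_trace_apply (hS.matrix_mul hS), fderiv_matrix_mul_apply hS hS,
    fderiv_Ssym_apply, trace_add, trace_mul_comm (Ssym Y), trace_mul_Ssym (transpose_Ssym A)]
  ring

lemma fderiv_trace_sq_apply (A Y : Matrix (Fin m) (Fin m) ℝ) :
    fderiv ℝ (fun X : Matrix (Fin m) (Fin m) ℝ => X.trace ^ 2) A Y = 2 * A.trace * Y.trace := by
  have h : HasFDerivAt (fun X : Matrix (Fin m) (Fin m) ℝ => X.trace ^ 2) _ A :=
    (hasDerivAt_pow 2 A.trace).comp_hasFDerivAt A isBoundedLinearMap_matrix_trace.hasFDerivAt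
  rw [h.fderiv]
  show ((2 : ℕ) : ℝ) * A.trace ^ (2 - 1) * Y.trace = _
  ring

lemma fderiv_nsq_brk_self_transpose_apply (A Y : Matrix (Fin m) (Fin m) ℝ) :
    fderiv ℝ (fun X => nsq (brk X Xᵀ)) A Y = 4 * (brk Aᵀ (brk A Aᵀ) * Y).trace := by
  have hid : DifferentiableAt ℝ (fun X : Matrix (Fin m) (Fin m) ℝ => X) A := differentiableAt_id
  rw [fderiv_nsq_apply (hid.brk hid.matrix_transpose), fderiv_brk_apply hid hid.matrix_transpose,
    fderiv_matrix_transpose_apply hid, fderiv_fun_id, ContinuousLinearMap.id_apply,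
    transpose_brk_self_transpose, trace_mul_brk_add_brk_transpose (transpose_brk_self_transpose A)]
  ring

end Gradients

lemma fderiv_sq_div_apply {E : Type*} [NormedAddCommGroup E] [NormedSpace ℝ E] {N D : E → ℝ}
    {x : E} (hN : DifferentiableAt ℝ N x) (hD : DifferentiableAt ℝ D x) (hx : D x ≠ 0) (v : E) :
    fderiv ℝ (fun y => N y ^ 2 / D y) x v
      = N x * (2 * D x * fderiv ℝ N x v - N x * fderiv ℝ D x v) / D x ^ 2 := by
  have h : HasFDerivAt (fun y => N y ^ 2 / D y) _ x :=
    (hN.hasFDerivAt.pow 2).mul ((hasDerivAt_inv hx).comp_hasFDerivAt x hD.hasFDerivAt)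
  rw [h.fderiv]
  simp only [_root_.add_apply, _root_.smul_apply, smul_eq_mul, nsmul_eq_mul]
  field_simp
  ring

section Pinching

/- `Fpinch A` unfolds to `pinchN A ^ 2 / pinchD A`. -/
noncomputable def pinchN (A : Matrix (Fin m) (Fin m) ℝ) : ℝ :=
  (Ssym A * Ssym A).trace + A.trace ^ 2

noncomputable def pinchD (A : Matrix (Fin m) (Fin m) ℝ) : ℝ :=
  (Ssym A * Ssym A).trace * pinchN A + 1 / 4 * nsq (brk A Aᵀ)

variable (A : Matrix (Fin m) (Fin m) ℝ)

lemma pinchD_pos {A : Matrix (Fin m) (Fin m) ℝ} (hS : Ssym A ≠ 0) : 0 < pinchD A := by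
  have hp : 0 < (Ssym A * Ssym A).trace := by
    simpa [transpose_Ssym] using trace_mul_transpose_self_pos hS
  have hr := trace_mul_transpose_self_nonneg (brk A Aᵀ)
  unfold pinchD pinchN nsq
  positivity

lemma differentiableAt_trace_Ssym_mul_Ssym :
    DifferentiableAt ℝ (fun X => (Ssym X * Ssym X).trace) A :=
  ((differentiableAt_Ssym A).matrix_mul (differentiableAt_Ssym A)).matrix_trace

lemma differentiableAt_trace_sq :
    DifferentiableAt ℝ (fun X : Matrix (Fin m) (Fin m) ℝ => X.trace ^ 2) A :=
  differentiableAt_id.matrix_trace.pow 2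

lemma differentiableAt_nsq_brk_self_transpose :
    DifferentiableAt ℝ (fun X => nsq (brk X Xᵀ)) A :=
  have h := differentiableAt_id.brk differentiableAt_id.matrix_transpose
  (h.matrix_mul h.matrix_transpose).matrix_trace

lemma differentiableAt_pinchN : DifferentiableAt ℝ pinchN A :=
  (differentiableAt_trace_Ssym_mul_Ssym A).add (differentiableAt_trace_sq A)

lemma differentiableAt_pinchD : DifferentiableAt ℝ pinchD A :=
  ((differentiableAt_trace_Ssym_mul_Ssym A).mul (differentiableAt_pinchN A)).add
    ((differentiableAt_nsq_brk_self_transpose A).const_mul _)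

lemma fderiv_pinchN_apply (Y : Matrix (Fin m) (Fin m) ℝ) :
    fderiv ℝ pinchN A Y = 2 * (Ssym A * Y).trace + 2 * A.trace * Y.trace := by
  have h : HasFDerivAt pinchN (fderiv ℝ (fun X => (Ssym X * Ssym X).trace) A
      + fderiv ℝ (fun X : Matrix (Fin m) (Fin m) ℝ => X.trace ^ 2) A) A :=
    (differentiableAt_trace_Ssym_mul_Ssym A).hasFDerivAt.add
      (differentiableAt_trace_sq A).hasFDerivAt
  rw [h.fderiv, _root_.add_apply, fderiv_trace_Ssym_mul_Ssym_apply, fderiv_trace_sq_apply]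

lemma fderiv_pinchD_apply (Y : Matrix (Fin m) (Fin m) ℝ) :
    fderiv ℝ pinchD A Y = 2 * (Ssym A * Y).trace * pinchN A
      + (Ssym A * Ssym A).trace * fderiv ℝ pinchN A Y + (brk Aᵀ (brk A Aᵀ) * Y).trace := by
  have h : HasFDerivAt pinchD ((Ssym A * Ssym A).trace • fderiv ℝ pinchN A
      + pinchN A • fderiv ℝ (fun X => (Ssym X * Ssym X).trace) A
      + (1 / 4 : ℝ) • fderiv ℝ (fun X => nsq (brk X Xᵀ)) A) A :=
    ((differentiableAt_trace_Ssym_mul_Ssym A).hasFDerivAt.mul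
      (differentiableAt_pinchN A).hasFDerivAt).add
      ((differentiableAt_nsq_brk_self_transpose A).hasFDerivAt.const_mul _)
  rw [h.fderiv, _root_.add_apply, _root_.add_apply, _root_.smul_apply, _root_.smul_apply,
    _root_.smul_apply, fderiv_trace_Ssym_mul_Ssym_apply, fderiv_nsq_brk_self_transpose_apply,
    smul_eq_mul, smul_eq_mul, smul_eq_mul]
  ring

lemma fderiv_Fpinch_apply {A : Matrix (Fin m) (Fin m) ℝ} (hA : pinchD A ≠ 0)
    (Y : Matrix (Fin m) (Fin m) ℝ) :
    fderiv ℝ Fpinch A Y = pinchN A * (2 * pinchD A * fderiv ℝ pinchN A Y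
      - pinchN A * fderiv ℝ pinchD A Y) / pinchD A ^ 2 :=
  fderiv_sq_div_apply (differentiableAt_pinchN A) (differentiableAt_pinchD A) hA Y

lemma fderiv_Fpinch_apply_brk {A : Matrix (Fin m) (Fin m) ℝ} (hA : pinchD A ≠ 0)
    (B : Matrix (Fin m) (Fin m) ℝ) :
    fderiv ℝ Fpinch A (brk A B) = -(B * (c2 A • brk A Aᵀ
      - (2 * c3 A) • brk Aᵀ (brk A (brk A Aᵀ)))).trace / (2 * pinchD A ^ 2) := by
  rw [fderiv_Fpinch_apply hA, fderiv_pinchD_apply, fderiv_pinchN_apply, trace_brk,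
    trace_Ssym_mul_brk, trace_mul_brk (brk Aᵀ (brk A Aᵀ)), ← brk_transpose_brk_brk,
    Matrix.mul_sub, trace_sub, Matrix.mul_smul, Matrix.mul_smul, trace_smul, trace_smul,
    smul_eq_mul, smul_eq_mul]
  unfold c2 c3
  field_simp
  unfold pinchD pinchN
  ring

end Pinching

/-- `A` (with `S(A) ≠ 0`) is a critical point of `F` restricted to its
conjugation orbit (i.e. the derivative of `F` at `A` vanishes on the tangent space
`[A, M_{n-1}(ℝ)]` of the orbit) iff `c₂(A)[A,Aᵀ] = 2c₃(A)[Aᵀ,[A,[A,Aᵀ]]]`. -/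
theorem stmt_12 (m : ℕ) (A : Matrix (Fin m) (Fin m) ℝ) (hS : Ssym A ≠ 0) :
    (∀ B : Matrix (Fin m) (Fin m) ℝ, fderiv ℝ Fpinch A (brk A B) = 0) ↔
      c2 A • brk A Aᵀ = (2 * c3 A) • brk Aᵀ (brk A (brk A Aᵀ)) := by
  have hA := (pinchD_pos hS).ne'
  rw [← sub_eq_zero, ext_iff_trace_mul_left]
  simp [fderiv_Fpinch_apply_brk hA, hA]
end

section
/- Let A ∈ M_{n-1}(ℝ) satisfy (1/2)tr(A²) + (tr A)² ≥ 0 and S(A) ∉ ℝI. Then for every B conjugate to A, F(B) ≥ 1/3, where F(B) = ((1/2)|B|² + c₀)² / (((1/2)|B|² + d₀)((1/2)|B|² + c₀) + (1/4)|[B,Bᵀ]|²) with c₀ = (1/2)tr(A²) + (tr A)², d₀ = (1/2)tr(A²). -/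
open Matrix

lemma nsq_eq_sum {m : ℕ} (X : Matrix (Fin m) (Fin m) ℝ) :
    nsq X = ∑ i, ∑ j, X i j ^ 2 := by
  simp [nsq, Matrix.trace, Matrix.mul_apply, Matrix.diag, sq]

lemma nsq_nonneg {m : ℕ} (X : Matrix (Fin m) (Fin m) ℝ) : 0 ≤ nsq X := by
  rw [nsq_eq_sum]
  exact Finset.sum_nonneg fun i _ => Finset.sum_nonneg fun j _ => sq_nonneg _

lemma nsq_eq_zero {m : ℕ} (X : Matrix (Fin m) (Fin m) ℝ) (h : nsq X = 0) : X = 0 := by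
  rw [nsq_eq_sum] at h
  ext i j
  have h1 : ∀ i ∈ Finset.univ, (0:ℝ) ≤ ∑ j, X i j ^ 2 :=
    fun i _ => Finset.sum_nonneg fun j _ => sq_nonneg _
  have h2 := (Finset.sum_eq_zero_iff_of_nonneg h1).mp h i (Finset.mem_univ i)
  have h3 := (Finset.sum_eq_zero_iff_of_nonneg (fun j _ => sq_nonneg (X i j))).mp h2 j
    (Finset.mem_univ j)
  simpa using pow_eq_zero_iff (n := 2) (by norm_num) |>.mp h3

lemma nsq_transpose {m : ℕ} (X : Matrix (Fin m) (Fin m) ℝ) : nsq Xᵀ = nsq X := by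
  rw [nsq, nsq, transpose_transpose, Matrix.trace_mul_comm]

/-- Cauchy–Schwarz: `|X Xᵀ|² ≤ |X|⁴`. -/
lemma nsq_mul_transpose_le {m : ℕ} (X : Matrix (Fin m) (Fin m) ℝ) :
    nsq (X * Xᵀ) ≤ nsq X ^ 2 := by
  rw [nsq_eq_sum, nsq_eq_sum]
  have key : ∀ i j : Fin m, (X * Xᵀ) i j ^ 2 ≤ (∑ k, X i k ^ 2) * (∑ k, X j k ^ 2) := by
    intro i j
    have := Finset.sum_mul_sq_le_sq_mul_sq Finset.univ (fun k => X i k) (fun k => X j k)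
    simpa [Matrix.mul_apply, Matrix.transpose_apply] using this
  calc ∑ i, ∑ j, (X * Xᵀ) i j ^ 2
      ≤ ∑ i, ∑ j, (∑ k, X i k ^ 2) * (∑ k, X j k ^ 2) := by
        refine Finset.sum_le_sum fun i _ => Finset.sum_le_sum fun j _ => key i j
    _ = (∑ i, ∑ k, X i k ^ 2) ^ 2 := by
        rw [sq, Finset.sum_mul]
        refine Finset.sum_congr rfl fun i _ => ?_
        rw [← Finset.mul_sum]
    _ = _ := rfl

lemma nsq_ssym {m : ℕ} (B : Matrix (Fin m) (Fin m) ℝ) :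
    nsq (Ssym B) = (1/2) * nsq B + (1/2) * (B * B).trace := by
  have hT : (Ssym B)ᵀ = Ssym B := by
    simp [Ssym, Matrix.transpose_smul, Matrix.transpose_add, add_comm]
  rw [nsq, hT, Ssym, smul_mul_assoc, mul_smul_comm, add_mul, mul_add, mul_add]
  have h1 : (Bᵀ * Bᵀ).trace = (B * B).trace := by
    rw [← Matrix.transpose_mul, Matrix.trace_transpose]
  have h2 : (Bᵀ * B).trace = (B * Bᵀ).trace := Matrix.trace_mul_comm _ _
  simp only [Matrix.trace_smul, Matrix.trace_add, smul_eq_mul]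
  rw [h1, h2, nsq]
  ring

/-- key inequality `|[B,Bᵀ]|² ≤ 2|B|⁴`. -/
lemma nsq_brk_le {m : ℕ} (B : Matrix (Fin m) (Fin m) ℝ) :
    nsq (brk B Bᵀ) ≤ 2 * nsq B ^ 2 := by
  set M := B * Bᵀ with hM
  set N := Bᵀ * B with hN
  have hMT : Mᵀ = M := by simp [hM, Matrix.transpose_mul]
  have hNT : Nᵀ = N := by simp [hN, Matrix.transpose_mul]
  have hbrk : brk B Bᵀ = M - N := by simp [brk, hM, hN]
  have hexp : nsq (brk B Bᵀ) = (M * M).trace + (N * N).trace - 2 * (M * N).trace := by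
    rw [hbrk, nsq, Matrix.transpose_sub, hMT, hNT, Matrix.sub_mul, Matrix.mul_sub,
      Matrix.mul_sub, Matrix.trace_sub, Matrix.trace_sub, Matrix.trace_sub]
    have : (N * M).trace = (M * N).trace := Matrix.trace_mul_comm _ _
    rw [this]; ring
  have hMN : 0 ≤ (M * N).trace := by
    have : (M * N).trace = nsq (B * B) := by
      rw [nsq, Matrix.transpose_mul, hM, hN]
      rw [show B * Bᵀ * (Bᵀ * B) = B * (Bᵀ * Bᵀ * B) by noncomm_ring,
        Matrix.trace_mul_comm, show Bᵀ * Bᵀ * B * B = Bᵀ * Bᵀ * (B * B) by noncomm_ring,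
        Matrix.trace_mul_comm]
    rw [this]; exact nsq_nonneg _
  have hM2 : (M * M).trace ≤ nsq B ^ 2 := by
    have : (M * M).trace = nsq M := by rw [nsq, hMT]
    rw [this, hM]; exact nsq_mul_transpose_le B
  have hN2 : (N * N).trace ≤ nsq B ^ 2 := by
    have h : (N * N).trace = nsq N := by rw [nsq, hNT]
    have h2 : nsq N = nsq (Bᵀ * Bᵀᵀ) := by rw [hN, transpose_transpose]
    rw [h, h2]
    calc nsq (Bᵀ * Bᵀᵀ) ≤ nsq Bᵀ ^ 2 := nsq_mul_transpose_le Bᵀ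
      _ = nsq B ^ 2 := by rw [nsq_transpose]
  linarith

/-- Let `A` satisfy `½ tr(A²) + (tr A)² ≥ 0` and `S(A) ∉ ℝ I`. Then for every
`B` conjugate to `A`, `F(B) ≥ 1/3`, where on the conjugacy class
`F(B) = (½|B|² + c₀)² / ((½|B|² + d₀)(½|B|² + c₀) + ¼|[B,Bᵀ]|²)` with
`c₀ = ½ tr(A²) + (tr A)²` and `d₀ = ½ tr(A²)`. -/
theorem stmt_17 (m : ℕ) (A : Matrix (Fin m) (Fin m) ℝ)
    (h1 : 0 ≤ (1 / 2) * (A * A).trace + A.trace ^ 2)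
    (h2 : ¬∃ c : ℝ, Ssym A = c • (1 : Matrix (Fin m) (Fin m) ℝ)) :
    ∀ B : Matrix (Fin m) (Fin m) ℝ,
      (∃ g : (Matrix (Fin m) (Fin m) ℝ)ˣ, B = (g : Matrix (Fin m) (Fin m) ℝ) * A * ((g⁻¹ : (Matrix (Fin m) (Fin m) ℝ)ˣ) : Matrix (Fin m) (Fin m) ℝ)) →
      (1 / 3 : ℝ) ≤
        ((1 / 2) * nsq B + ((1 / 2) * (A * A).trace + A.trace ^ 2)) ^ 2 /
          (((1 / 2) * nsq B + (1 / 2) * (A * A).trace) *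
              ((1 / 2) * nsq B + ((1 / 2) * (A * A).trace + A.trace ^ 2))
            + (1 / 4) * nsq (brk B Bᵀ)) := by
  rintro B ⟨g, hB⟩
  -- conjugation invariants
  have htr : B.trace = A.trace := by rw [hB]; exact Matrix.trace_units_conj g A
  have htr2 : (B * B).trace = (A * A).trace := by
    have : B * B = (g : Matrix (Fin m) (Fin m) ℝ) * (A * A) *
        ((g⁻¹ : (Matrix (Fin m) (Fin m) ℝ)ˣ) : Matrix (Fin m) (Fin m) ℝ) := by
      rw [hB]
      have hgg : ((g⁻¹ : (Matrix (Fin m) (Fin m) ℝ)ˣ) : Matrix (Fin m) (Fin m) ℝ) *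
          (g : Matrix (Fin m) (Fin m) ℝ) = 1 := by
        rw [← Units.val_mul]; simp
      calc (↑g * A * ↑g⁻¹) * (↑g * A * ↑g⁻¹)
          = ↑g * A * (↑g⁻¹ * ↑g) * A * ↑g⁻¹ := by noncomm_ring
        _ = ↑g * (A * A) * ↑g⁻¹ := by rw [hgg]; noncomm_ring
    rw [this, Matrix.trace_units_conj]
  set x : ℝ := (1/2) * nsq B with hx
  set d : ℝ := (1/2) * (A * A).trace with hd
  set c : ℝ := (1/2) * (A * A).trace + A.trace ^ 2 with hc
  have hx0 : 0 ≤ x := by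
    rw [hx]; have := nsq_nonneg B; linarith
  have hc0 : 0 ≤ c := h1
  have hdc : d ≤ c := by rw [hd, hc]; nlinarith [sq_nonneg A.trace]
  -- x + d = nsq (Ssym B) ≥ 0, and > 0
  have hxd_eq : x + d = nsq (Ssym B) := by
    rw [nsq_ssym, hx, hd, htr2]
  have hxd : 0 < x + d := by
    rcases lt_or_eq_of_le (nsq_nonneg (Ssym B)) with h | h
    · linarith [hxd_eq ▸ h]
    · exfalso
      have hS0 : Ssym B = 0 := nsq_eq_zero _ h.symm
      -- B is skew-symmetric
      have hskew : Bᵀ = -B := by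
        have : (2:ℝ) • Ssym B = B + Bᵀ := by
          rw [Ssym, smul_smul]; norm_num
        rw [hS0, smul_zero] at this
        linear_combination (norm := abel) -this
      have htrB : B.trace = 0 := by
        have := Matrix.trace_transpose B
        rw [hskew, Matrix.trace_neg] at this
        linarith
      have htrB2 : (B * B).trace = - nsq B := by
        rw [nsq, hskew, Matrix.mul_neg, Matrix.trace_neg, neg_neg]
      have hAtr : A.trace = 0 := by rw [← htr, htrB]
      have hnsqB : nsq B = 0 := by
        have h1' : 0 ≤ (1/2) * (A * A).trace := by
          have := hc0
          rw [hc, hAtr] at this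
          simpa using this
        rw [← htr2, htrB2] at h1'
        have := nsq_nonneg B
        linarith
      have hB0 : B = 0 := nsq_eq_zero _ hnsqB
      have hA0 : A = 0 := by
        have : (g : Matrix (Fin m) (Fin m) ℝ) * A *
            ((g⁻¹ : (Matrix (Fin m) (Fin m) ℝ)ˣ) : Matrix (Fin m) (Fin m) ℝ) = 0 := by
          rw [← hB]; exact hB0
        have h4 := congrArg (fun X => ((g⁻¹ : (Matrix (Fin m) (Fin m) ℝ)ˣ) : Matrix (Fin m) (Fin m) ℝ) * X * (g : Matrix (Fin m) (Fin m) ℝ)) this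
        simp only [Matrix.mul_zero, Matrix.zero_mul] at h4
        have hgg : ((g⁻¹ : (Matrix (Fin m) (Fin m) ℝ)ˣ) : Matrix (Fin m) (Fin m) ℝ) *
            (g : Matrix (Fin m) (Fin m) ℝ) = 1 := by rw [← Units.val_mul]; simp
        have hgg' : (g : Matrix (Fin m) (Fin m) ℝ) *
            ((g⁻¹ : (Matrix (Fin m) (Fin m) ℝ)ˣ) : Matrix (Fin m) (Fin m) ℝ) = 1 := by
          rw [← Units.val_mul]; simp
        calc A = ((g⁻¹:(Matrix (Fin m) (Fin m) ℝ)ˣ):Matrix (Fin m) (Fin m) ℝ) * ((g:Matrix (Fin m) (Fin m) ℝ) * A * ((g⁻¹:(Matrix (Fin m) (Fin m) ℝ)ˣ):Matrix (Fin m) (Fin m) ℝ)) * (g:Matrix (Fin m) (Fin m) ℝ) := by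
              rw [show ((g⁻¹:(Matrix (Fin m) (Fin m) ℝ)ˣ):Matrix (Fin m) (Fin m) ℝ) * ((g:Matrix (Fin m) (Fin m) ℝ) * A * ((g⁻¹:(Matrix (Fin m) (Fin m) ℝ)ˣ):Matrix (Fin m) (Fin m) ℝ)) * (g:Matrix (Fin m) (Fin m) ℝ) = (((g⁻¹:(Matrix (Fin m) (Fin m) ℝ)ˣ):Matrix (Fin m) (Fin m) ℝ) * (g:Matrix (Fin m) (Fin m) ℝ)) * A * (((g⁻¹:(Matrix (Fin m) (Fin m) ℝ)ˣ):Matrix (Fin m) (Fin m) ℝ) * (g:Matrix (Fin m) (Fin m) ℝ)) by noncomm_ring, hgg]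
              simp
          _ = 0 := by rw [this]; simp
      apply h2
      exact ⟨0, by rw [hA0]; simp [Ssym]⟩
  have hxc : 0 < x + c := by linarith
  -- the commutator bound
  have hq : (1/4) * nsq (brk B Bᵀ) ≤ 2 * x ^ 2 := by
    have := nsq_brk_le B
    rw [hx]; nlinarith [this]
  have hq0 : 0 ≤ (1/4) * nsq (brk B Bᵀ) := by
    have := nsq_nonneg (brk B Bᵀ); linarith
  -- conclude
  have hDpos : 0 < (x + d) * (x + c) + (1/4) * nsq (brk B Bᵀ) := by positivity
  clear_value x d c
  rw [le_div_iff₀ hDpos]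
  have e1 : (x + d) * (x + c) ≤ (x + c) ^ 2 := by
    have := mul_le_mul_of_nonneg_right (show x + d ≤ x + c by linarith) (le_of_lt hxc)
    nlinarith [this]
  have e2 : x ^ 2 ≤ (x + c) ^ 2 := by nlinarith [mul_nonneg hx0 hc0, sq_nonneg c]
  linarith
end
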